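/- arXiv:2402.09326 — 7 statements merged into one kernel-verified Lean document; each statement's English description precedes it below -/
import Mathlib

section
/- No deterministic ranking function is anonymous: for any ranking function r from n×L row-stochastic matrices to n×n doubly stochastic matrices (with n ≥ 2) whose output matrices have all entries in {0,1}, r cannot satisfy the anonymity property that every permutation of the rows of the input induces the same permutation of the rows of the output. -/
open Finset

/-- An `n × L` matrix is row-stochastic (a prediction matrix) if every row is a
probability distribution over the `L` labels. -/
def rowStochastic {n L : ℕ} (P : Fin n → Fin L → ℝ) : Prop :=
  (∀ i ℓ, 0 ≤ P i ℓ) ∧ ∀ i, ∑ ℓ, P i ℓ = 1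

/-- An `n × n` matrix is doubly stochastic. -/
def doublyStochastic' {n : ℕ} (M : Fin n → Fin n → ℝ) : Prop :=
  (∀ i k, 0 ≤ M i k) ∧ (∀ i, ∑ k, M i k = 1) ∧ (∀ k, ∑ i, M i k = 1)

/-- No deterministic ranking function (one whose outputs are
doubly stochastic with all entries in `{0,1}`, i.e. permutation matrices) can be
anonymous when `n ≥ 2`. -/
theorem deterministic_ranking_not_anonymous
    (n L : ℕ) (hn : 2 ≤ n) (hL : 1 ≤ L)
    (r : (Fin n → Fin L → ℝ) → Fin n → Fin n → ℝ)
    (hDS : ∀ P : Fin n → Fin L → ℝ, rowStochastic P → doublyStochastic' (r P))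
    (hdet : ∀ P : Fin n → Fin L → ℝ, rowStochastic P →
      ∀ i k, r P i k = 0 ∨ r P i k = 1) :
    ¬ (∀ (σ : Equiv.Perm (Fin n)) (P : Fin n → Fin L → ℝ), rowStochastic P →
        ∀ i k, r (fun a => P (σ a)) i k = r P (σ i) k) := by
  intro hanon
  -- the constant uniform matrix
  set P : Fin n → Fin L → ℝ := fun _ _ => (L : ℝ)⁻¹ with hP
  have hLpos : (0 : ℝ) < L := by exact_mod_cast hL
  have hPS : rowStochastic P := by
    constructor
    · intro i ℓ; positivity
    · intro i
      simp [hP, Finset.sum_const, Finset.card_univ]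
      field_simp
  obtain ⟨hnn, hrow, hcol⟩ := hDS P hPS
  let a : Fin n := ⟨0, by omega⟩
  let b : Fin n := ⟨1, by omega⟩
  have hab : a ≠ b := by simp [a, b, Fin.ext_iff]
  -- rows a and b of r P are equal
  have hrows : ∀ k, r P a k = r P b k := by
    intro k
    have := hanon (Equiv.swap a b) P hPS a k
    have hconst : (fun x => P ((Equiv.swap a b) x)) = P := by
      funext x ℓ; rfl
    rw [hconst, Equiv.swap_apply_left] at this
    exact this
  -- row a has a 1 somewhere
  have hex : ∃ k, r P a k = 1 := by
    by_contra h
    push_neg at h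
    have hzero : ∀ k : Fin n, k ∈ Finset.univ → r P a k = 0 := by
      intro k _
      rcases hdet P hPS a k with h0 | h1
      · exact h0
      · exact absurd h1 (h k)
    have := hrow a
    rw [Finset.sum_eq_zero hzero] at this
    norm_num at this
  obtain ⟨k, hk⟩ := hex
  have hbk : r P b k = 1 := (hrows k).symm ▸ hk
  have hle : (2 : ℝ) ≤ ∑ i, r P i k := by
    have hsub : ({a, b} : Finset (Fin n)) ⊆ Finset.univ := Finset.subset_univ _
    have := Finset.sum_le_sum_of_subset_of_nonneg hsub
      (fun i _ _ => hnn i k)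
    rw [Finset.sum_pair hab, hk, hbk] at this
    linarith
  rw [hcol k] at hle
  linarith
end

section
/- Any deterministic and γ-stable ranking function (for any finite γ) must be constant: it outputs the same permutation matrix for every input prediction matrix. -/
open Finset

/-- Any deterministic (outputs are permutation matrices) and
`γ`-stable ranking function must be constant: it outputs the same permutation
matrix on every prediction matrix. -/
theorem deterministic_stable_ranking_is_constant
    (n L : ℕ) (γ : ℝ)
    (r : (Fin n → Fin L → ℝ) → Fin n → Fin n → ℝ)
    (hDS : ∀ P : Fin n → Fin L → ℝ, rowStochastic P → doublyStochastic' (r P))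
    (hdet : ∀ P : Fin n → Fin L → ℝ, rowStochastic P →
      ∀ i k, r P i k = 0 ∨ r P i k = 1)
    (hstable : ∀ P P' : Fin n → Fin L → ℝ, rowStochastic P → rowStochastic P' →
      ∀ i k, |r P i k - r P' i k| ≤ γ * ∑ a, ∑ ℓ, |P a ℓ - P' a ℓ|) :
    ∀ P P' : Fin n → Fin L → ℝ, rowStochastic P → rowStochastic P' → r P = r P' := by
  intro P P' hP hP'
  set D := ∑ a, ∑ ℓ, |P a ℓ - P' a ℓ| with hDdef
  obtain ⟨N, hN⟩ := exists_nat_gt (max (γ * D) 0)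
  have hN0 : 0 < (N : ℝ) := lt_of_le_of_lt (le_max_right _ _) hN
  have hNγ : γ * D < N := lt_of_le_of_lt (le_max_left _ _) hN
  set Q : ℕ → (Fin n → Fin L → ℝ) :=
    fun k i ℓ => P i ℓ + ((k : ℝ) / N) * (P' i ℓ - P i ℓ) with hQ
  have hQrs : ∀ k, k ≤ N → rowStochastic (Q k) := by
    intro k hk
    have ht0 : (0:ℝ) ≤ (k:ℝ) / N := by positivity
    have ht1 : (k:ℝ) / N ≤ 1 := by
      rw [div_le_one hN0]; exact_mod_cast hk
    constructor
    · intro i ℓ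
      have h1 : Q k i ℓ = (1 - (k:ℝ)/N) * P i ℓ + ((k:ℝ)/N) * P' i ℓ := by
        simp only [hQ]; ring
      rw [h1]
      have h2 := hP.1 i ℓ
      have h3 := hP'.1 i ℓ
      nlinarith [sub_nonneg.mpr ht1]
    · intro i
      have h1 : ∑ ℓ, Q k i ℓ
          = (∑ ℓ, P i ℓ) + ((k:ℝ)/N) * ((∑ ℓ, P' i ℓ) - ∑ ℓ, P i ℓ) := by
        simp only [hQ]
        rw [Finset.sum_add_distrib, ← Finset.mul_sum, Finset.sum_sub_distrib]
      rw [h1, hP.2 i, hP'.2 i]; ring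
  have hstep : ∀ k : ℕ, ∑ a, ∑ ℓ, |Q k a ℓ - Q (k+1) a ℓ| = D / N := by
    intro k
    have h1 : ∀ a ℓ, |Q k a ℓ - Q (k+1) a ℓ| = |P a ℓ - P' a ℓ| / N := by
      intro a ℓ
      have h2 : Q k a ℓ - Q (k+1) a ℓ = (P a ℓ - P' a ℓ) / N := by
        simp only [hQ]; push_cast; ring
      rw [h2, abs_div, abs_of_pos hN0]
    simp only [h1, ← Finset.sum_div, hDdef]
  have key : ∀ k, k < N → r (Q k) = r (Q (k+1)) := by
    intro k hk
    funext i j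
    have h01 := hdet _ (hQrs k hk.le) i j
    have h01' := hdet _ (hQrs (k+1) hk) i j
    have hb := hstable _ _ (hQrs k hk.le) (hQrs (k+1) hk) i j
    rw [hstep k] at hb
    have hlt : γ * (D / N) < 1 := by
      rw [← mul_div_assoc, div_lt_one hN0]; exact hNγ
    have hb' := hb.trans_lt hlt
    rcases h01 with h | h <;> rcases h01' with h' | h'
    · rw [h, h']
    · rw [h, h'] at hb'; norm_num at hb'
    · rw [h, h'] at hb'; norm_num at hb'
    · rw [h, h']
  have chain : ∀ k, k ≤ N → r (Q 0) = r (Q k) := by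
    intro k
    induction k with
    | zero => intro _; rfl
    | succ m ih =>
      intro hm
      have hmN : m < N := hm
      rw [ih hmN.le, key m hmN]
  have hQ0 : Q 0 = P := by
    funext i ℓ; simp [hQ]
  have hQN : Q N = P' := by
    funext i ℓ
    simp only [hQ]
    rw [div_self (ne_of_gt hN0)]; ring
  rw [← hQ0, ← hQN]
  exact chain N le_rfl
end

section
/- For the uncertainty aware ranking: given two prediction matrices P, Q ∈ P_{n,L} with rows p_i, q_i, for any individual i, position k, and label ℓ, the conditional probabilities of i being ranked at position k given λ_i = ℓ under the UA ranking distributions for P and Q differ by at most 2·Σ_{i'≠i} d_TV(p_{i'}, q_{i'}). -/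
open Finset

/-- `N^{>ℓ}`: the number of individuals whose label is strictly better than `ℓ`
under the label assignment `lam`. -/
def nGT {n L : ℕ} (lam : Fin n → Fin L) (ℓ : Fin L) : ℕ :=
  (Finset.univ.filter fun j => ℓ < lam j).card

/-- `N^{=ℓ}`: the number of individuals whose label equals `ℓ`. -/
def nEQ {n L : ℕ} (lam : Fin n → Fin L) (ℓ : Fin L) : ℕ :=
  (Finset.univ.filter fun j => lam j = ℓ).card

/-- `N^{>ℓ}_{−i}`: the number of individuals other than `i` whose label is
strictly better than `ℓ`. -/
def nGTm {n L : ℕ} (lam : Fin n → Fin L) (i : Fin n) (ℓ : Fin L) : ℕ :=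
  ((Finset.univ.erase i).filter fun j => ℓ < lam j).card

/-- `N^{=ℓ}_{−i}`: the number of individuals other than `i` whose label equals
`ℓ`. -/
def nEQm {n L : ℕ} (lam : Fin n → Fin L) (i : Fin n) (ℓ : Fin L) : ℕ :=
  ((Finset.univ.erase i).filter fun j => lam j = ℓ).card

/-- Conditioned on the full label assignment `lam`, the probability that
individual `i` receives (0-indexed) rank `k` when individuals are sorted by
decreasing label with uniform tie-breaking: it is `1 / N^{=λᵢ}` if
`N^{>λᵢ} ≤ k < N^{>λᵢ} + N^{=λᵢ}` and `0` otherwise. -/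
noncomputable def condRank {n L : ℕ} (lam : Fin n → Fin L) (i k : Fin n) : ℝ :=
  if nGT lam (lam i) ≤ k.val ∧ k.val < nGT lam (lam i) + nEQ lam (lam i)
  then ((nEQ lam (lam i) : ℝ))⁻¹ else 0

/-- The uncertainty aware (UA) ranking function: `rUA P i k` is the probability
that individual `i` receives rank `k` when labels `λ_j ∼ P j` are drawn
independently and individuals are ranked by decreasing label with uniform
tie-breaking. -/
noncomputable def rUA {n L : ℕ} (P : Fin n → Fin L → ℝ) : Fin n → Fin n → ℝ :=
  fun i k => ∑ lam : Fin n → Fin L, (∏ j, P j (lam j)) * condRank lam i k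

/-- The probability, under the UA ranking for prediction matrix `P`, that
individual `i` receives rank `k`, conditioned on `λ_i = ℓ` (the labels of the
other individuals being drawn independently from the rows of `P`). -/
noncomputable def condProbGiven {n L : ℕ} (P : Fin n → Fin L → ℝ)
    (i k : Fin n) (ℓ : Fin L) : ℝ :=
  ∑ lam : Fin n → Fin L,
    if lam i = ℓ then (∏ j ∈ Finset.univ.erase i, P j (lam j)) * condRank lam i k
    else 0

/-- The total variation distance between the label distributions of individual
`i'` under `P` and under `Q` (half the `ℓ¹` distance of the rows). -/
noncomputable def rowTV {n L : ℕ} (P Q : Fin n → Fin L → ℝ) (i' : Fin n) : ℝ :=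
  (1 / 2) * ∑ ℓ, |P i' ℓ - Q i' ℓ|

lemma condRank_nonneg {n L : ℕ} (lam : Fin n → Fin L) (i k : Fin n) :
    0 ≤ condRank lam i k := by
  unfold condRank; split <;> positivity

lemma condRank_le_one {n L : ℕ} (lam : Fin n → Fin L) (i k : Fin n) :
    condRank lam i k ≤ 1 := by
  unfold condRank
  split
  · rename_i h
    have h1 : 1 ≤ nEQ lam (lam i) := by omega
    have h2 : (1:ℝ) ≤ (nEQ lam (lam i) : ℝ) := by exact_mod_cast h1
    exact inv_le_one_of_one_le₀ h2
  · norm_num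

lemma sum_prod_pi {n L : ℕ} (h : Fin n → Fin L → ℝ) :
    ∑ lam : Fin n → Fin L, ∏ j, h j (lam j) = ∏ j, ∑ ℓ', h j ℓ' := by
  rw [Finset.prod_univ_sum, Fintype.piFinset_univ]

lemma condProbGiven_congr {n L : ℕ} (A B : Fin n → Fin L → ℝ)
    (i k : Fin n) (ℓ : Fin L) (h : ∀ j, j ≠ i → A j = B j) :
    condProbGiven A i k ℓ = condProbGiven B i k ℓ := by
  unfold condProbGiven
  refine Finset.sum_congr rfl fun lam _ => ?_
  by_cases hli : lam i = ℓ
  · simp only [if_pos hli]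
    congr 1
    refine Finset.prod_congr rfl fun j hj => ?_
    rw [h j (Finset.ne_of_mem_erase hj)]
  · simp [hli]

lemma swap_bound {n L : ℕ} (A B : Fin n → Fin L → ℝ)
    (hA0 : ∀ j ℓ', 0 ≤ A j ℓ') (hA1 : ∀ j, ∑ ℓ', A j ℓ' = 1)
    (i a k : Fin n) (ℓ : Fin L) (hai : a ≠ i)
    (hAB : ∀ j, j ≠ a → A j = B j) :
    |condProbGiven A i k ℓ - condProbGiven B i k ℓ| ≤ ∑ ℓ', |A a ℓ' - B a ℓ'| := by
  classical
  have ha : a ∈ Finset.univ.erase i := Finset.mem_erase.2 ⟨hai, Finset.mem_univ a⟩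
  set s2 : Finset (Fin n) := (Finset.univ.erase i).erase a with hs2
  have hdiff : ∀ lam : Fin n → Fin L,
      (∏ j ∈ Finset.univ.erase i, A j (lam j)) - (∏ j ∈ Finset.univ.erase i, B j (lam j))
        = (A a (lam a) - B a (lam a)) * ∏ j ∈ s2, A j (lam j) := by
    intro lam
    have h1 : ∏ j ∈ Finset.univ.erase i, A j (lam j)
        = A a (lam a) * ∏ j ∈ s2, A j (lam j) :=
      (Finset.mul_prod_erase _ _ ha).symm
    have h2eq : ∏ j ∈ s2, B j (lam j) = ∏ j ∈ s2, A j (lam j) :=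
      Finset.prod_congr rfl fun j hj => by rw [hAB j (Finset.ne_of_mem_erase hj)]
    have h2 : ∏ j ∈ Finset.univ.erase i, B j (lam j)
        = B a (lam a) * ∏ j ∈ s2, B j (lam j) :=
      (Finset.mul_prod_erase _ _ ha).symm
    rw [h1, h2, h2eq]; ring
  have key : |condProbGiven A i k ℓ - condProbGiven B i k ℓ|
      ≤ ∑ lam : Fin n → Fin L,
          (if lam i = ℓ then |A a (lam a) - B a (lam a)| * ∏ j ∈ s2, A j (lam j) else 0) := by
    unfold condProbGiven
    rw [← Finset.sum_sub_distrib]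
    refine (Finset.abs_sum_le_sum_abs _ _).trans (Finset.sum_le_sum ?_)
    intro lam _
    by_cases hli : lam i = ℓ
    · simp only [if_pos hli]
      rw [← sub_mul, hdiff lam, abs_mul, abs_mul]
      have hprod : 0 ≤ ∏ j ∈ s2, A j (lam j) :=
        Finset.prod_nonneg fun j _ => hA0 _ _
      rw [abs_of_nonneg hprod, abs_of_nonneg (condRank_nonneg lam i k)]
      calc |A a (lam a) - B a (lam a)| * (∏ j ∈ s2, A j (lam j)) * condRank lam i k
          ≤ |A a (lam a) - B a (lam a)| * (∏ j ∈ s2, A j (lam j)) * 1 := by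
            apply mul_le_mul_of_nonneg_left (condRank_le_one lam i k) (by positivity)
        _ = _ := by rw [mul_one]
    · simp [hli]
  refine key.trans_eq ?_
  set hf : Fin n → Fin L → ℝ := fun j ℓ' => if j = i then (if ℓ' = ℓ then (1:ℝ) else 0)
      else if j = a then |A a ℓ' - B a ℓ'| else A j ℓ' with hhf
  have hterm : ∀ lam : Fin n → Fin L,
      (if lam i = ℓ then |A a (lam a) - B a (lam a)| * ∏ j ∈ s2, A j (lam j) else 0)
      = ∏ j, hf j (lam j) := by
    intro lam
    simp only [hhf]
    rw [← Finset.mul_prod_erase Finset.univ _ (Finset.mem_univ i),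
        ← Finset.mul_prod_erase _ _ ha]
    have hrest : (∏ j ∈ s2, (if j = i then (if lam j = ℓ then (1:ℝ) else 0)
          else if j = a then |A a (lam j) - B a (lam j)| else A j (lam j)))
        = ∏ j ∈ s2, A j (lam j) := by
      refine Finset.prod_congr rfl fun j hj => ?_
      rw [hs2, Finset.mem_erase, Finset.mem_erase] at hj
      rw [if_neg hj.2.1, if_neg hj.1]
    rw [hrest]
    simp only [if_pos rfl, if_neg hai]
    by_cases hli : lam i = ℓ
    · simp [hli]
    · simp [hli]
  rw [Finset.sum_congr rfl fun lam _ => hterm lam, sum_prod_pi hf]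
  simp only [hhf]
  rw [← Finset.mul_prod_erase Finset.univ _ (Finset.mem_univ i),
      ← Finset.mul_prod_erase _ _ ha]
  have hrest : (∏ j ∈ s2, ∑ ℓ', (if j = i then (if ℓ' = ℓ then (1:ℝ) else 0)
        else if j = a then |A a ℓ' - B a ℓ'| else A j ℓ')) = 1 := by
    rw [Finset.prod_congr rfl (fun j hj => ?_)]
    · exact Finset.prod_const_one
    · rw [hs2, Finset.mem_erase, Finset.mem_erase] at hj
      simp only [if_neg hj.2.1, if_neg hj.1]
      exact hA1 j
  rw [hrest]
  simp [hai, Finset.sum_ite_eq, Finset.sum_ite_eq']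

/-- **key lemma.** For any two prediction matrices `P, Q`, any
individual `i`, position `k` and label `ℓ`, the conditional probabilities of
`i` being ranked at `k` given `λ_i = ℓ` under the UA rankings for `P` and `Q`
differ by at most `2 Σ_{i' ≠ i} d_TV(p_{i'}, q_{i'})`. -/
theorem condProbGiven_diff_le
    (n L : ℕ) (P Q : Fin n → Fin L → ℝ)
    (hP : rowStochastic P) (hQ : rowStochastic Q)
    (i k : Fin n) (ℓ : Fin L) :
    |condProbGiven P i k ℓ - condProbGiven Q i k ℓ| ≤
      2 * ∑ i' ∈ Finset.univ.erase i, rowTV P Q i' := by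
  classical
  set H : Finset (Fin n) → Fin n → Fin L → ℝ := fun s j => if j ∈ s then Q j else P j with hH
  have hmain : ∀ s : Finset (Fin n),
      |condProbGiven P i k ℓ - condProbGiven (H s) i k ℓ|
        ≤ ∑ j ∈ s.erase i, ∑ ℓ', |P j ℓ' - Q j ℓ'| := by
    intro s
    induction s using Finset.induction_on with
    | empty =>
      have hE : H ∅ = P := by funext j ℓ'; simp [hH]
      rw [hE]; simp
    | @insert a s has ih =>
      by_cases hai : a = i
      · subst hai
        have hEq : condProbGiven (H (insert a s)) a k ℓ = condProbGiven (H s) a k ℓ := by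
          refine condProbGiven_congr _ _ _ _ _ fun j hj => ?_
          simp [hH, Finset.mem_insert, hj]
        rw [hEq, Finset.erase_insert_eq_erase]
        exact ih
      · have hsw : |condProbGiven (H s) i k ℓ - condProbGiven (H (insert a s)) i k ℓ|
            ≤ ∑ ℓ', |P a ℓ' - Q a ℓ'| := by
          have hA0 : ∀ j ℓ', 0 ≤ H s j ℓ' := by
            intro j ℓ'; simp only [hH]; split
            · exact hQ.1 j ℓ'
            · exact hP.1 j ℓ'
          have hA1 : ∀ j, ∑ ℓ', H s j ℓ' = 1 := by
            intro j; simp only [hH]; split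
            · exact hQ.2 j
            · exact hP.2 j
          have hAB : ∀ j, j ≠ a → H s j = H (insert a s) j := by
            intro j hj; simp [hH, Finset.mem_insert, hj]
          have := swap_bound (H s) (H (insert a s)) hA0 hA1 i a k ℓ hai hAB
          have hHa : H s a = P a := by simp [hH, has]
          have hHa2 : H (insert a s) a = Q a := by simp [hH]
          rwa [hHa, hHa2] at this
        have tri := abs_sub_le (condProbGiven P i k ℓ) (condProbGiven (H s) i k ℓ)
          (condProbGiven (H (insert a s)) i k ℓ)
        have herase : (insert a s).erase i = insert a (s.erase i) :=
          Finset.erase_insert_of_ne hai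
        have hnotmem : a ∉ s.erase i := fun hmem => has (Finset.mem_of_mem_erase hmem)
        rw [herase, Finset.sum_insert hnotmem]
        linarith
  have hfin := hmain Finset.univ
  have hU : H Finset.univ = Q := by funext j ℓ'; simp [hH]
  rw [hU] at hfin
  refine hfin.trans_eq ?_
  rw [Finset.mul_sum]
  refine Finset.sum_congr rfl fun j _ => ?_
  unfold rowTV
  ring
end

section
/- The uncertainty aware ranking function is 1-stable: for all prediction matrices P, Q ∈ P_{n,L}, ||r_UA(P) - r_UA(Q)||_∞ ≤ ||P - Q||_1. -/
open Finset

/-- Key lemma: changing a single row `a` changes `rUA` by at most the `ℓ¹`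
distance between the two versions of row `a`. -/
lemma rUA_row_change {n L : ℕ} (R R' : Fin n → Fin L → ℝ) (a : Fin n)
    (hRnn : ∀ j ℓ, 0 ≤ R j ℓ) (hRsum : ∀ j, j ≠ a → ∑ ℓ, R j ℓ = 1)
    (hagree : ∀ j, j ≠ a → R' j = R j) (i k : Fin n) :
    |rUA R i k - rUA R' i k| ≤ ∑ ℓ, |R a ℓ - R' a ℓ| := by
  have hprod : ∀ lam : Fin n → Fin L,
      (∏ j, R j (lam j)) - (∏ j, R' j (lam j))
        = (R a (lam a) - R' a (lam a)) * ∏ j ∈ Finset.univ.erase a, R j (lam j) := by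
    intro lam
    rw [← Finset.mul_prod_erase Finset.univ (fun j => R j (lam j)) (Finset.mem_univ a),
        ← Finset.mul_prod_erase Finset.univ (fun j => R' j (lam j)) (Finset.mem_univ a)]
    have : ∀ j ∈ Finset.univ.erase a, R' j (lam j) = R j (lam j) := by
      intro j hj
      rw [hagree j (Finset.ne_of_mem_erase hj)]
    rw [Finset.prod_congr rfl this]
    ring
  have hdiff : rUA R i k - rUA R' i k
      = ∑ lam : Fin n → Fin L,
          ((R a (lam a) - R' a (lam a)) * ∏ j ∈ Finset.univ.erase a, R j (lam j))
            * condRank lam i k := by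
    unfold rUA
    rw [← Finset.sum_sub_distrib]
    refine Finset.sum_congr rfl fun lam _ => ?_
    rw [← sub_mul, hprod lam]
  rw [hdiff]
  -- bound term-by-term
  have hbound : ∀ lam : Fin n → Fin L,
      |((R a (lam a) - R' a (lam a)) * ∏ j ∈ Finset.univ.erase a, R j (lam j))
          * condRank lam i k|
        ≤ |R a (lam a) - R' a (lam a)| * ∏ j ∈ Finset.univ.erase a, R j (lam j) := by
    intro lam
    have hpnn : 0 ≤ ∏ j ∈ Finset.univ.erase a, R j (lam j) :=
      Finset.prod_nonneg fun j _ => hRnn j (lam j)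
    rw [abs_mul, abs_mul, abs_of_nonneg hpnn]
    have h1 : |condRank lam i k| ≤ 1 := by
      rw [abs_of_nonneg (condRank_nonneg lam i k)]
      exact condRank_le_one lam i k
    calc |R a (lam a) - R' a (lam a)| * (∏ j ∈ Finset.univ.erase a, R j (lam j))
          * |condRank lam i k|
        ≤ |R a (lam a) - R' a (lam a)| * (∏ j ∈ Finset.univ.erase a, R j (lam j)) * 1 := by
          apply mul_le_mul_of_nonneg_left h1 (by positivity)
      _ = _ := by ring
  calc |∑ lam : Fin n → Fin L,
          ((R a (lam a) - R' a (lam a)) * ∏ j ∈ Finset.univ.erase a, R j (lam j))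
            * condRank lam i k|
      ≤ ∑ lam : Fin n → Fin L,
          |((R a (lam a) - R' a (lam a)) * ∏ j ∈ Finset.univ.erase a, R j (lam j))
            * condRank lam i k| := Finset.abs_sum_le_sum_abs _ _
    _ ≤ ∑ lam : Fin n → Fin L,
          |R a (lam a) - R' a (lam a)| * ∏ j ∈ Finset.univ.erase a, R j (lam j) :=
        Finset.sum_le_sum fun lam _ => hbound lam
    _ = ∑ ℓ, |R a ℓ - R' a ℓ| := by
        -- factor the sum over functions
        set h : Fin n → Fin L → ℝ :=
          fun j ℓ => if j = a then |R a ℓ - R' a ℓ| else R j ℓ with hh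
        have hterm : ∀ lam : Fin n → Fin L,
            |R a (lam a) - R' a (lam a)| * ∏ j ∈ Finset.univ.erase a, R j (lam j)
              = ∏ j, h j (lam j) := by
          intro lam
          rw [← Finset.mul_prod_erase Finset.univ (fun j => h j (lam j)) (Finset.mem_univ a)]
          simp only [hh, if_pos rfl]
          congr 1
          refine Finset.prod_congr rfl fun j hj => ?_
          simp [Finset.ne_of_mem_erase hj]
        rw [Finset.sum_congr rfl fun lam _ => hterm lam]
        have := Finset.prod_univ_sum (fun _ : Fin n => (Finset.univ : Finset (Fin L)))
          (fun j ℓ => h j ℓ)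
        rw [Fintype.piFinset_univ] at this
        rw [← this]
        rw [← Finset.mul_prod_erase Finset.univ (fun j => ∑ ℓ, h j ℓ) (Finset.mem_univ a)]
        have h1 : ∀ j ∈ Finset.univ.erase a, (∑ ℓ, h j ℓ) = 1 := by
          intro j hj
          have hja := Finset.ne_of_mem_erase hj
          simp only [hh, if_neg hja]
          exact hRsum j hja
        rw [Finset.prod_congr rfl h1]
        simp [hh]

/-- The uncertainty aware ranking function is `1`-stable:
for all prediction matrices `P, Q`, the entrywise `∞`-norm of
`rUA P − rUA Q` is at most the entrywise `1`-norm of `P − Q`. -/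
theorem rUA_one_stable
    (n L : ℕ) (P Q : Fin n → Fin L → ℝ)
    (hP : rowStochastic P) (hQ : rowStochastic Q) :
    ∀ i k : Fin n, |rUA P i k - rUA Q i k| ≤ ∑ a, ∑ ℓ, |P a ℓ - Q a ℓ| := by
  intro i k
  -- hybrid matrices
  set H : ℕ → Fin n → Fin L → ℝ :=
    fun m j ℓ => if (j : ℕ) < m then P j ℓ else Q j ℓ with hH
  have hHn : H n = P := by
    funext j ℓ; simp [hH, j.isLt]
  have hH0 : H 0 = Q := by
    funext j ℓ; simp [hH]
  have htel : rUA P i k - rUA Q i k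
      = ∑ m ∈ Finset.range n, (rUA (H (m + 1)) i k - rUA (H m) i k) := by
    rw [Finset.sum_range_sub (fun m => rUA (H m) i k), hHn, hH0]
  rw [htel]
  have hstep : ∀ (m : ℕ) (hmn : m < n),
      |rUA (H (m + 1)) i k - rUA (H m) i k|
        ≤ ∑ ℓ, |P (⟨m, hmn⟩ : Fin n) ℓ - Q ⟨m, hmn⟩ ℓ| := by
    intro m hmn
    set a : Fin n := ⟨m, hmn⟩ with ha
    have hnn : ∀ j ℓ, 0 ≤ H (m + 1) j ℓ := by
      intro j ℓ; simp only [hH]; split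
      · exact hP.1 j ℓ
      · exact hQ.1 j ℓ
    have hsum : ∀ j : Fin n, j ≠ a → ∑ ℓ, H (m + 1) j ℓ = 1 := by
      intro j _; simp only [hH]; split
      · exact hP.2 j
      · exact hQ.2 j
    have hagree : ∀ j : Fin n, j ≠ a → H m j = H (m + 1) j := by
      intro j hj
      funext ℓ
      have hne : (j : ℕ) ≠ m := fun h => hj (Fin.ext h)
      simp only [hH]
      by_cases hlt : (j : ℕ) < m
      · rw [if_pos hlt, if_pos (Nat.lt_succ_of_lt hlt)]
      · rw [if_neg hlt, if_neg (by omega)]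
    have := rUA_row_change (H (m + 1)) (H m) a hnn hsum hagree i k
    have heq : ∑ ℓ, |H (m + 1) a ℓ - H m a ℓ| = ∑ ℓ, |P a ℓ - Q a ℓ| := by
      refine Finset.sum_congr rfl fun ℓ _ => ?_
      simp only [hH, ha]
      rw [if_pos (Nat.lt_succ_self m), if_neg (lt_irrefl m)]
    rw [heq] at this
    exact this
  calc |∑ m ∈ Finset.range n, (rUA (H (m + 1)) i k - rUA (H m) i k)|
      ≤ ∑ m ∈ Finset.range n, |rUA (H (m + 1)) i k - rUA (H m) i k| :=
        Finset.abs_sum_le_sum_abs _ _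
    _ ≤ ∑ m ∈ Finset.range n,
          (if hm : m < n then ∑ ℓ, |P ⟨m, hm⟩ ℓ - Q ⟨m, hm⟩ ℓ| else 0) := by
        refine Finset.sum_le_sum fun m hm => ?_
        have hmn : m < n := Finset.mem_range.mp hm
        rw [dif_pos hmn]
        exact hstep m hmn
    _ = ∑ a : Fin n, ∑ ℓ, |P a ℓ - Q a ℓ| := by
        rw [Finset.sum_range fun m => _]
        · refine Finset.sum_congr rfl fun a _ => ?_
          rw [dif_pos a.isLt]
end

section
/- For a prediction matrix in which individual 1 has deterministic label distribution supported on {label 1, label 3} with probability 1/2 each, and individuals 2 through n deterministically have label 2, the UA ranking places individual 1 at the last position n with probability exactly 1/2; whereas if individual 1 deterministically has label 1 it is placed last with probability 1. Consequently, the UA ranking function is not γ-stable for any γ < 1/2 when L ≥ 3 and n ≥ 2. -/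
open Finset

/-! The UA ranking is affine in each row of the prediction matrix, and on a deterministic matrix
it is the tie-broken ranking of the underlying label assignment. Under `P` individual `0` is, with
probability `1/2` each, the unique worst individual (ranked last) or the unique best one (ranked
first); under `P'` it is always the unique worst. So the probability of being ranked last jumps
by `1/2` while `P` and `P'` differ by `1` in `ℓ¹`. -/

open Function

section Counting

variable {n L : ℕ} {lam : Fin n → Fin L} {i : Fin n}

lemma nEQ_self_of_forall_ne (h : ∀ j ≠ i, lam j ≠ lam i) : nEQ lam (lam i) = 1 := by
  rw [nEQ, card_eq_one]
  refine ⟨i, ?_⟩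
  ext j
  simp only [mem_filter, mem_univ, true_and, mem_singleton]
  exact ⟨fun hj => by_contra fun hji => h j hji hj, fun hji => hji ▸ rfl⟩

lemma nGT_self_of_forall_lt (h : ∀ j ≠ i, lam i < lam j) : nGT lam (lam i) = n - 1 := by
  have : (univ.filter fun j => lam i < lam j) = univ.erase i := by
    ext j
    simpa using ⟨fun hj hji => (hji ▸ hj).false, h j⟩
  rw [nGT, this, card_erase_of_mem (mem_univ i), card_univ, Fintype.card_fin]

lemma nGT_self_of_forall_le (h : ∀ j, lam j ≤ lam i) : nGT lam (lam i) = 0 := by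
  rw [nGT, card_eq_zero, filter_eq_empty_iff]
  exact fun j _ => not_lt.mpr (h j)

lemma condRank_of_forall_lt (h : ∀ j ≠ i, lam i < lam j) (k : Fin n) :
    condRank lam i k = if k.val = n - 1 then 1 else 0 := by
  rw [condRank, nGT_self_of_forall_lt h, nEQ_self_of_forall_ne fun j hj => (h j hj).ne']
  have := k.isLt
  congr 1
  · exact propext (by omega)
  · simp

lemma condRank_of_forall_gt (h : ∀ j ≠ i, lam j < lam i) (k : Fin n) :
    condRank lam i k = if k.val = 0 then 1 else 0 := by
  have hle : ∀ j, lam j ≤ lam i := fun j => by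
    rcases eq_or_ne j i with rfl | hj
    exacts [le_rfl, (h j hj).le]
  rw [condRank, nGT_self_of_forall_le hle, nEQ_self_of_forall_ne fun j hj => (h j hj).ne]
  congr 1
  · exact propext (by omega)
  · simp

end Counting

section RowAffine

variable {n L : ℕ}

lemma prod_update_apply (P : Fin n → Fin L → ℝ) (a : Fin n) (u : Fin L → ℝ)
    (lam : Fin n → Fin L) :
    ∏ j, update P a u j (lam j) = u (lam a) * ∏ j ∈ univ.erase a, P j (lam j) := by
  rw [← mul_prod_erase univ _ (mem_univ a), update_self]
  congr 1
  exact prod_congr rfl fun j hj => by rw [update_of_ne (ne_of_mem_erase hj)]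

lemma rUA_update_add (P : Fin n → Fin L → ℝ) (a : Fin n) (u v : Fin L → ℝ) (c d : ℝ)
    (i k : Fin n) :
    rUA (update P a (c • u + d • v)) i k =
      c * rUA (update P a u) i k + d * rUA (update P a v) i k := by
  simp only [rUA, prod_update_apply, mul_sum, ← sum_add_distrib]
  refine sum_congr rfl fun lam _ => ?_
  simp only [Pi.add_apply, Pi.smul_apply, smul_eq_mul]
  ring

lemma rUA_single (lam : Fin n → Fin L) (i k : Fin n) :
    rUA (fun j => Pi.single (lam j) (1 : ℝ)) i k = condRank lam i k := by
  rw [rUA, Fintype.sum_eq_single lam]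
  · simp
  · intro μ hμ
    obtain ⟨j, hj⟩ := Function.ne_iff.mp hμ
    rw [prod_eq_zero (mem_univ j) (Pi.single_eq_of_ne hj _), zero_mul]

lemma rUA_update_const_single (a : Fin n) (ℓ m : Fin L) (i k : Fin n) :
    rUA (update (fun _ => Pi.single m (1 : ℝ)) a (Pi.single ℓ 1)) i k =
      condRank (update (fun _ => m) a ℓ) i k := by
  rw [← rUA_single]
  congr 1
  funext j
  rcases eq_or_ne j a with rfl | hj <;> simp [*]

lemma rUA_update_const_single_of_lt {ℓ m : Fin L} (hℓ : ℓ < m) (a k : Fin n) :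
    rUA (update (fun _ => Pi.single m (1 : ℝ)) a (Pi.single ℓ 1)) a k =
      if k.val = n - 1 then 1 else 0 := by
  rw [rUA_update_const_single, condRank_of_forall_lt]
  intro j hj
  simpa [hj] using hℓ

lemma rUA_update_const_single_of_gt {ℓ m : Fin L} (hℓ : m < ℓ) (a k : Fin n) :
    rUA (update (fun _ => Pi.single m (1 : ℝ)) a (Pi.single ℓ 1)) a k =
      if k.val = 0 then 1 else 0 := by
  rw [rUA_update_const_single, condRank_of_forall_gt]
  intro j hj
  simpa [hj] using hℓ

end RowAffine

section Stability

variable {n L : ℕ}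

lemma rowStochastic_iff_forall_mem_stdSimplex {P : Fin n → Fin L → ℝ} :
    rowStochastic P ↔ ∀ i, P i ∈ stdSimplex ℝ (Fin L) := by
  simp only [rowStochastic, stdSimplex, Set.mem_ofPred_eq, forall_and]

lemma rowStochastic_update_const {u v : Fin L → ℝ} (hu : u ∈ stdSimplex ℝ (Fin L))
    (hv : v ∈ stdSimplex ℝ (Fin L)) (a : Fin n) :
    rowStochastic (update (fun _ => v) a u) := by
  rw [rowStochastic_iff_forall_mem_stdSimplex, forall_update_iff _ fun _ w => w ∈ _]
  exact ⟨hu, fun _ _ => hv⟩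

lemma sum_abs_sub_update_update (P : Fin n → Fin L → ℝ) (a : Fin n) (u v : Fin L → ℝ) :
    ∑ j, ∑ ℓ, |update P a u j ℓ - update P a v j ℓ| = ∑ ℓ, |u ℓ - v ℓ| := by
  rw [Fintype.sum_eq_single a fun j hj => by simp [hj]]
  simp

lemma sum_abs_midpoint_sub_single {ℓ m : Fin L} (h : ℓ ≠ m) :
    ∑ x, |((1 / 2 : ℝ) • Pi.single ℓ 1 + (1 / 2 : ℝ) • Pi.single m 1 : Fin L → ℝ) x -
      (Pi.single ℓ 1 : Fin L → ℝ) x| = 1 := by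
  rw [Fintype.sum_eq_add ℓ m h]
  · norm_num [h, h.symm]
  · rintro x ⟨hxℓ, hxm⟩
    simp [hxℓ, hxm]

end Stability

/-- With `n ≥ 2` individuals and `L ≥ 3` labels, consider the
prediction matrix `P` in which individual `0` has label `1` (worst) or label
`3` (index `2`) with probability `1/2` each and all other individuals
deterministically have label `2` (index `1`), and the matrix `P'` which is
identical except individual `0` deterministically has the worst label. Then
the UA ranking places individual `0` in the last position with probability
exactly `1/2` under `P` and probability `1` under `P'`; consequently, the UA
ranking function is not `γ`-stable for any `γ < 1/2`. -/
theorem rUA_stability_lower_bound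
    (n L : ℕ) (hn : 2 ≤ n) (hL : 3 ≤ L) :
    rUA (fun j ℓ => if j = (⟨0, by omega⟩ : Fin n)
          then (if ℓ.val = 0 ∨ ℓ.val = 2 then (1 / 2 : ℝ) else 0)
          else (if ℓ.val = 1 then (1 : ℝ) else 0) : Fin n → Fin L → ℝ)
        ⟨0, by omega⟩ ⟨n - 1, by omega⟩ = 1 / 2 ∧
    rUA (fun j ℓ => if j = (⟨0, by omega⟩ : Fin n)
          then (if ℓ.val = 0 then (1 : ℝ) else 0)
          else (if ℓ.val = 1 then (1 : ℝ) else 0) : Fin n → Fin L → ℝ)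
        ⟨0, by omega⟩ ⟨n - 1, by omega⟩ = 1 ∧
    ∀ γ : ℝ, γ < 1 / 2 →
      ¬ (∀ P Q : Fin n → Fin L → ℝ, rowStochastic P → rowStochastic Q →
          ∀ i k : Fin n, |rUA P i k - rUA Q i k| ≤ γ * ∑ a, ∑ ℓ, |P a ℓ - Q a ℓ|) := by
  set a : Fin n := ⟨0, by omega⟩
  set last : Fin n := ⟨n - 1, by omega⟩
  set lo : Fin L := ⟨0, by omega⟩
  set mid : Fin L := ⟨1, by omega⟩
  set hi : Fin L := ⟨2, by omega⟩
  have hlo : lo < mid := Fin.lt_def.mpr zero_lt_one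
  have hhi : mid < hi := Fin.lt_def.mpr one_lt_two
  set R : Fin n → Fin L → ℝ := fun _ => Pi.single mid 1
  set u : Fin L → ℝ := (1 / 2 : ℝ) • Pi.single lo 1 + (1 / 2 : ℝ) • Pi.single hi 1
  have hP : (fun j ℓ => if j = a then (if ℓ.val = 0 ∨ ℓ.val = 2 then (1 / 2 : ℝ) else 0)
      else (if ℓ.val = 1 then (1 : ℝ) else 0) : Fin n → Fin L → ℝ) = update R a u := by
    funext j ℓ
    by_cases hj : j = a
    · simp only [hj, ↓reduceIte, update_self, u, lo, hi, Pi.add_apply, Pi.smul_apply, smul_eq_mul,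
        Pi.single_apply, Fin.ext_iff]
      split_ifs <;> first | omega | norm_num
    · simp [hj, R, mid, Pi.single_apply, Fin.ext_iff]
  have hQ : (fun j ℓ => if j = a then (if ℓ.val = 0 then (1 : ℝ) else 0)
      else (if ℓ.val = 1 then (1 : ℝ) else 0) : Fin n → Fin L → ℝ)
      = update R a (Pi.single lo 1) := by
    funext j ℓ
    by_cases hj : j = a <;> simp [hj, R, lo, mid, Pi.single_apply, Fin.ext_iff]
  have hlast : rUA (update R a (Pi.single lo 1)) a last = 1 := by
    simp [R, rUA_update_const_single_of_lt hlo, last]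
  have hsplit : rUA (update R a u) a last = 1 / 2 := by
    rw [rUA_update_add, hlast, rUA_update_const_single_of_gt hhi]
    simp [last, show n - 1 ≠ 0 by omega]
  have hu : u ∈ stdSimplex ℝ (Fin L) := convex_stdSimplex ℝ (Fin L)
    (single_mem_stdSimplex ℝ lo) (single_mem_stdSimplex ℝ hi) (by norm_num) (by norm_num) (by norm_num)
  rw [hP, hQ]
  refine ⟨hsplit, hlast, fun γ hγ hstable => ?_⟩
  have := hstable _ _ (rowStochastic_update_const hu (single_mem_stdSimplex ℝ mid) a)
    (rowStochastic_update_const (single_mem_stdSimplex ℝ lo) (single_mem_stdSimplex ℝ mid) a) a last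
  rw [hsplit, hlast, sum_abs_sub_update_update, sum_abs_midpoint_sub_single (hlo.trans hhi).ne] at this
  norm_num at this
  linarith
end

section
/- If f is (C, α)-multiaccurate with X ∈ C, then for every set S ∈ C and every position k, |E_{x⃗∼D^n, i∼Unif[n]}[1_{x_i∈S}·(Pr_{r_UA(f*(x⃗))}[i at rank k] − Pr_{r_UA(f(x⃗))}[i at rank k])]| ≤ L·n·α. -/
/-!
Fix the index `i`. The coordinates of `x⃗` are independent, so averaging the UA rank
probability of `i` over `x⃗ ∼ Dⁿ` (restricted to `x_i ∈ S`) leaves an expectation over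
independent labels in which label `j ≠ i` is drawn from the mixture `∑ₓ D x • g x` and label
`i` from the `S`-restricted mixture `∑_{x ∈ S} D x • g x`, for `g = f*` and `g = f`.
Multiaccuracy on `X` and on `S` makes the `f*`- and `f`-mixtures entrywise `α`-close.
Replacing the `n` rows one at a time changes the expectation of the `[0, 1]`-valued
conditional rank probability by at most the `ℓ¹` distance `L α` of the swapped rows, hence by
`n L α` in total, and averaging over `i` keeps this bound.
-/

open Finset

open scoped Classical

lemma prod_apply_update {ι κ M : Type*} [Fintype ι] [DecidableEq ι] [CommMonoid M]
    (F : ι → κ → M) (g : ι → κ) (a : ι) (v : κ) :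
    ∏ j, F j (Function.update g a v j) = F a v * ∏ j ∈ Finset.univ \ {a}, F j (g j) := by
  simp only [Function.apply_update F, Finset.prod_update_of_mem (Finset.mem_univ a)]

section ProductExpectation

variable {ι β : Type*} [Fintype ι] [DecidableEq ι] [Fintype β]

noncomputable def expectPi (P : ι → β → ℝ) (c : (ι → β) → ℝ) : ℝ :=
  ∑ lam : ι → β, (∏ j, P j (lam j)) * c lam

lemma rUA_eq_expectPi {n L : ℕ} (P : Fin n → Fin L → ℝ) (i k : Fin n) :
    rUA P i k = expectPi P fun lam => condRank lam i k := rfl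

lemma abs_expectPi_le (P : ι → β → ℝ) {c : (ι → β) → ℝ} (hc : ∀ lam, |c lam| ≤ 1) :
    |expectPi P c| ≤ ∏ j, ∑ ℓ, |P j ℓ| := by
  rw [Fintype.prod_sum]
  refine (Finset.abs_sum_le_sum_abs _ _).trans (Finset.sum_le_sum fun lam _ => ?_)
  rw [abs_mul, Finset.abs_prod]
  exact mul_le_of_le_one_right (by positivity) (hc lam)

lemma expectPi_update_sub (P : ι → β → ℝ) (a : ι) (u v : β → ℝ) (c : (ι → β) → ℝ) :
    expectPi (Function.update P a u) c - expectPi (Function.update P a v) c =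
      expectPi (Function.update P a (u - v)) c := by
  simp only [expectPi, ← Finset.sum_sub_distrib]
  refine Finset.sum_congr rfl fun lam _ => ?_
  simp only [prod_apply_update (fun j p => p (lam j)) P a, Pi.sub_apply]
  ring

lemma abs_expectPi_update_sub_le {P : ι → β → ℝ} {a : ι} (hP : ∀ j ≠ a, ∑ ℓ, |P j ℓ| ≤ 1)
    (u v : β → ℝ) {c : (ι → β) → ℝ} (hc : ∀ lam, |c lam| ≤ 1) :
    |expectPi (Function.update P a u) c - expectPi (Function.update P a v) c| ≤
      ∑ ℓ, |u ℓ - v ℓ| := by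
  rw [expectPi_update_sub]
  calc _ ≤ ∏ j, ∑ ℓ, |Function.update P a (u - v) j ℓ| := abs_expectPi_le _ hc
    _ = (∑ ℓ, |u ℓ - v ℓ|) * ∏ j ∈ Finset.univ \ {a}, ∑ ℓ, |P j ℓ| :=
      prod_apply_update (fun _ p => ∑ ℓ, |p ℓ|) P a (u - v)
    _ ≤ ∑ ℓ, |u ℓ - v ℓ| :=
      mul_le_of_le_one_right (by positivity) (Finset.prod_le_one (fun _ _ => by positivity)
        fun j hj => hP j (by simpa using hj))

/-- Hybrid argument: swap the rows of `B` for those of `A` one at a time. -/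
theorem abs_expectPi_sub_le {A B : ι → β → ℝ} (hA : ∀ j, ∑ ℓ, |A j ℓ| ≤ 1)
    (hB : ∀ j, ∑ ℓ, |B j ℓ| ≤ 1) {c : (ι → β) → ℝ} (hc : ∀ lam, |c lam| ≤ 1) :
    |expectPi A c - expectPi B c| ≤ ∑ j, ∑ ℓ, |A j ℓ - B j ℓ| := by
  suffices h : ∀ s : Finset ι,
      |expectPi (s.piecewise A B) c - expectPi B c| ≤ ∑ j ∈ s, ∑ ℓ, |A j ℓ - B j ℓ| by
    simpa using h Finset.univ
  intro s
  induction s using Finset.induction_on with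
  | empty => simp
  | insert a s ha ih =>
    have hP : ∀ j ≠ a, ∑ ℓ, |s.piecewise A B j ℓ| ≤ 1 := fun j _ =>
      Finset.piecewise_cases s A B (fun p => ∑ ℓ, |p ℓ| ≤ 1) (hA j) (hB j)
    have hPa : s.piecewise A B = Function.update (s.piecewise A B) a (B a) := by
      rw [← Finset.piecewise_eq_of_notMem s A B ha, Function.update_eq_self]
    rw [Finset.piecewise_insert, Finset.sum_insert ha]
    calc _ ≤ |expectPi (Function.update (s.piecewise A B) a (A a)) c -
            expectPi (s.piecewise A B) c| + |expectPi (s.piecewise A B) c - expectPi B c| :=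
          abs_sub_le _ _ _
      _ ≤ _ := by
        gcongr
        nth_rw 2 [hPa]
        exact abs_expectPi_update_sub_le hP _ _ hc

end ProductExpectation

lemma abs_condRank_le_one {n L : ℕ} (lam : Fin n → Fin L) (i k : Fin n) :
    |condRank lam i k| ≤ 1 := by
  unfold condRank
  split_ifs
  · have hpos : 0 < nEQ lam (lam i) := Finset.card_pos.2 ⟨i, by simp⟩
    rw [abs_inv, Nat.abs_cast]
    exact inv_le_one_of_one_le₀ (by exact_mod_cast hpos)
  · simp

/-- Drawing `x j ∼ Q j` and then `λ j ∼ g (x j)` independently is the same as drawing each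
`λ j` independently from the mixture `∑ x, Q j x • g x`. -/
lemma sum_prod_mul_expectPi {ι β X : Type*} [Fintype ι] [DecidableEq ι] [Fintype β]
    [Fintype X]
    (Q : ι → X → ℝ) (g : X → β → ℝ) (c : (ι → β) → ℝ) :
    ∑ xs : ι → X, (∏ j, Q j (xs j)) * expectPi (fun j => g (xs j)) c =
      expectPi (fun j ℓ => ∑ x, Q j x * g x ℓ) c := by
  simp only [expectPi, Finset.mul_sum, Fintype.prod_sum, Finset.sum_mul]
  rw [Finset.sum_comm]
  refine Finset.sum_congr rfl fun lam _ => Finset.sum_congr rfl fun xs _ => ?_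
  rw [Finset.prod_mul_distrib]
  ring

lemma sum_abs_mixture_le_one {β X : Type*} [Fintype β] [Fintype X] {Q : X → ℝ}
    (hQ0 : ∀ x, 0 ≤ Q x) (hQ1 : ∑ x, Q x ≤ 1)
    {g : X → β → ℝ} (hg : ∀ x, ∑ ℓ, |g x ℓ| ≤ 1) :
    ∑ ℓ, |∑ x, Q x * g x ℓ| ≤ 1 :=
  calc ∑ ℓ, |∑ x, Q x * g x ℓ| ≤ ∑ ℓ, ∑ x, Q x * |g x ℓ| :=
        Finset.sum_le_sum fun ℓ _ => (Finset.abs_sum_le_sum_abs _ _).trans_eq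
          (by simp only [abs_mul, abs_of_nonneg (hQ0 _)])
    _ = ∑ x, Q x * ∑ ℓ, |g x ℓ| := by simp only [Finset.mul_sum]; exact Finset.sum_comm
    _ ≤ ∑ x, Q x := Finset.sum_le_sum fun x _ => mul_le_of_le_one_right (hQ0 x) (hg x)
    _ ≤ 1 := hQ1

lemma prod_indicator_update_univ_mul {ι X : Type*} [Fintype ι] [DecidableEq ι] (D : X → ℝ)
    (S : Set X) (i : ι) (xs : ι → X) (r : ℝ) :
    (∏ j, (Function.update (fun _ => Set.univ) i S j).indicator D (xs j)) * r =
      (∏ j, D (xs j)) * if xs i ∈ S then r else 0 := by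
  by_cases hi : xs i ∈ S
  · refine congrArg (· * r) (Finset.prod_congr rfl fun j _ => ?_) |>.trans (by rw [if_pos hi])
    rcases eq_or_ne j i with rfl | hj <;> simp [*]
  · rw [if_neg hi, mul_zero, Finset.prod_eq_zero (Finset.mem_univ i) (by simp [hi]), zero_mul]

lemma sum_prod_mul_ite_expectPi {ι β X : Type*} [Fintype ι] [DecidableEq ι] [Fintype β]
    [Fintype X] (D : X → ℝ) (g : X → β → ℝ) (S : Set X) (i : ι) (c : (ι → β) → ℝ) :
    ∑ xs : ι → X, (∏ j, D (xs j)) * (if xs i ∈ S then expectPi (fun j => g (xs j)) c else 0) =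
      expectPi (fun j ℓ =>
        ∑ x, (Function.update (fun _ => Set.univ) i S j).indicator D x * g x ℓ) c := by
  rw [← sum_prod_mul_expectPi]
  exact Finset.sum_congr rfl fun xs _ => (prod_indicator_update_univ_mul D S i xs _).symm

lemma abs_sum_prod_mul_ite_expectPi_sub_le {ι β X : Type*} [Fintype ι] [DecidableEq ι]
    [Fintype β] [Fintype X] {D : X → ℝ} (hD0 : ∀ x, 0 ≤ D x) (hD1 : ∑ x, D x = 1)
    {g₁ g₂ : X → β → ℝ} (hg₁ : ∀ x, ∑ ℓ, |g₁ x ℓ| ≤ 1) (hg₂ : ∀ x, ∑ ℓ, |g₂ x ℓ| ≤ 1)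
    {𝒞 : Set (Set X)} (hXC : Set.univ ∈ 𝒞) {α : ℝ}
    (hMA : ∀ S ∈ 𝒞, ∀ ℓ, |∑ x, D x * (if x ∈ S then g₁ x ℓ - g₂ x ℓ else 0)| ≤ α)
    {S : Set X} (hS : S ∈ 𝒞) (i : ι) {c : (ι → β) → ℝ} (hc : ∀ lam, |c lam| ≤ 1) :
    |∑ xs : ι → X, (∏ j, D (xs j)) *
        (if xs i ∈ S then expectPi (fun j => g₁ (xs j)) c - expectPi (fun j => g₂ (xs j)) c
          else 0)| ≤ Fintype.card ι * (Fintype.card β * α) := by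
  set T : ι → Set X := Function.update (fun _ => Set.univ) i S
  have hT : ∀ j, T j ∈ 𝒞 := fun j => by
    rcases eq_or_ne j i with rfl | hj <;> simp [T, *]
  have hrow : ∀ g : X → β → ℝ, (∀ x, ∑ ℓ, |g x ℓ| ≤ 1) →
      ∀ j, ∑ ℓ, |∑ x, (T j).indicator D x * g x ℓ| ≤ 1 := fun g hg j =>
    sum_abs_mixture_le_one (Set.indicator_nonneg fun x _ => hD0 x)
      ((Finset.sum_le_sum fun x _ => Set.indicator_le_self' (fun x _ => hD0 x) x).trans hD1.le) hg
  have mul_ite_sub : ∀ (p : Prop) [Decidable p] (w a b : ℝ),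
      w * (if p then a - b else 0) = w * (if p then a else 0) - w * (if p then b else 0) := by
    intros; split_ifs <;> ring
  simp only [mul_ite_sub, Finset.sum_sub_distrib, sum_prod_mul_ite_expectPi]
  calc _ ≤ _ := abs_expectPi_sub_le (hrow g₁ hg₁) (hrow g₂ hg₂) hc
    _ ≤ ∑ _j : ι, ∑ _ℓ : β, α :=
        Finset.sum_le_sum fun j _ => Finset.sum_le_sum fun ℓ _ => by
          rw [← Finset.sum_sub_distrib]
          refine (congrArg abs (Finset.sum_congr rfl fun x _ => ?_)).trans_le (hMA _ (hT j) ℓ)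
          rw [Set.indicator_apply]
          split_ifs <;> ring
    _ = _ := by simp

theorem rUA_multiaccuracy_composition_general
    {X : Type*} [Fintype X] (n L : ℕ)
    (D : X → ℝ) (hD0 : ∀ x, 0 ≤ D x) (hD1 : ∑ x, D x = 1)
    (fstar f : X → Fin L → ℝ)
    (hfstar : ∀ x : X, (∀ ℓ, 0 ≤ fstar x ℓ) ∧ ∑ ℓ, fstar x ℓ = 1)
    (hf : ∀ x : X, (∀ ℓ, 0 ≤ f x ℓ) ∧ ∑ ℓ, f x ℓ = 1)
    (𝒞 : Set (Set X)) (hXC : Set.univ ∈ 𝒞) (α : ℝ)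
    (hMA : ∀ S ∈ 𝒞, ∀ ℓ : Fin L,
      |∑ x, D x * (if x ∈ S then fstar x ℓ - f x ℓ else 0)| ≤ α) :
    ∀ S ∈ 𝒞, ∀ k : Fin n,
      |∑ xs : Fin n → X, (∏ j, D (xs j)) *
          ((1 / (n : ℝ)) * ∑ i,
            (if xs i ∈ S then
              rUA (fun j => fstar (xs j)) i k - rUA (fun j => f (xs j)) i k
            else 0))|
        ≤ L * n * α := by
  intro S hS k
  have hrow : ∀ g : X → Fin L → ℝ, (∀ x, (∀ ℓ, 0 ≤ g x ℓ) ∧ ∑ ℓ, g x ℓ = 1) →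
      ∀ x, ∑ ℓ, |g x ℓ| ≤ 1 := fun g hg x => by
    simp [abs_of_nonneg ((hg x).1 _), (hg x).2]
  have per_index (i : Fin n) := abs_sum_prod_mul_ite_expectPi_sub_le hD0 hD1
    (hrow fstar hfstar) (hrow f hf) hXC hMA hS i (abs_condRank_le_one · i k)
  simp only [Fintype.card_fin, ← rUA_eq_expectPi] at per_index
  have hn : (n : ℝ) ≠ 0 := Nat.cast_ne_zero.2 k.pos.ne'
  simp only [Finset.mul_sum, mul_left_comm _ (1 / (n : ℝ))]
  rw [Finset.sum_comm]
  simp only [← Finset.mul_sum]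
  rw [abs_mul, abs_of_pos (by positivity)]
  calc _ ≤ 1 / (n : ℝ) * ∑ _i : Fin n, n * (L * α) := by
        gcongr
        exact (Finset.abs_sum_le_sum_abs _ _).trans (Finset.sum_le_sum fun i _ => per_index i)
    _ = L * n * α := by
        simp only [Finset.sum_const, Finset.card_univ, Fintype.card_fin, nsmul_eq_mul]
        field_simp

/-- If the predictor `f` is `(𝒞, α)`-multiaccurate with
respect to the ground truth `fstar` over a (finite) population `X` with
distribution `D`, and the whole population `Set.univ ∈ 𝒞`, then for every
group `S ∈ 𝒞` and every position `k`, the expected difference (over an i.i.d.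
sample `x⃗ ∼ Dⁿ` and a uniform index `i`) between the UA rank-`k` probability
of `x_i` under the ground truth predictions and under `f`, restricted to
`x_i ∈ S`, is at most `L · n · α`. -/
theorem rUA_multiaccuracy_composition
    {X : Type*} [Fintype X] (n L : ℕ) (hn : 1 ≤ n)
    (D : X → ℝ) (hD0 : ∀ x, 0 ≤ D x) (hD1 : ∑ x, D x = 1)
    (fstar f : X → Fin L → ℝ)
    (hfstar : ∀ x : X, (∀ ℓ, 0 ≤ fstar x ℓ) ∧ ∑ ℓ, fstar x ℓ = 1)
    (hf : ∀ x : X, (∀ ℓ, 0 ≤ f x ℓ) ∧ ∑ ℓ, f x ℓ = 1)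
    (𝒞 : Set (Set X)) (hXC : Set.univ ∈ 𝒞) (α : ℝ)
    (hMA : ∀ S ∈ 𝒞, ∀ ℓ : Fin L,
      |∑ x, D x * (if x ∈ S then fstar x ℓ - f x ℓ else 0)| ≤ α) :
    ∀ S ∈ 𝒞, ∀ k : Fin n,
      |∑ xs : Fin n → X, (∏ j, D (xs j)) *
          ((1 / (n : ℝ)) * ∑ i,
            (if xs i ∈ S then
              rUA (fun j => fstar (xs j)) i k - rUA (fun j => f (xs j)) i k
            else 0))|
        ≤ L * n * α :=
  rUA_multiaccuracy_composition_general n L D hD0 hD1 fstar f hfstar hf 𝒞 hXC α hMA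
end

section
/- The mixture ranking function r_mix^φ = φ·r_UA + (1−φ)·r_opt is (φ, 1−φ)-approximately stable: for all prediction matrices P, P', ||r_mix^φ(P) − r_mix^φ(P')||_∞ ≤ φ·||P−P'||_1 + (1−φ). -/
open Finset

/-- Total variation bound for product distributions. -/
lemma tv_prod {n L : ℕ} (P Q : Fin n → Fin L → ℝ)
    (hP : rowStochastic P) (hQ : rowStochastic Q) :
    ∑ lam : Fin n → Fin L, |(∏ j, P j (lam j)) - ∏ j, Q j (lam j)|
      ≤ ∑ a, ∑ ℓ, |P a ℓ - Q a ℓ| := by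
  classical
  -- hybrid products
  set F : (Fin n → Fin L) → ℕ → ℝ :=
    fun lam m => ∏ k : Fin n, if (k : ℕ) < m then P k (lam k) else Q k (lam k) with hF
  have hF0 : ∀ lam, F lam 0 = ∏ j, Q j (lam j) := by
    intro lam; simp [hF]
  have hFn : ∀ lam, F lam n = ∏ j, P j (lam j) := by
    intro lam; simp [hF, Fin.is_lt]
  have tele : ∀ lam, (∏ j, P j (lam j)) - ∏ j, Q j (lam j)
      = ∑ j ∈ Finset.range n, (F lam (j + 1) - F lam j) := by
    intro lam
    rw [Finset.sum_range_sub (F lam), hF0, hFn]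
  have step : ∀ (j : Fin n) (lam : Fin n → Fin L),
      F lam ((j : ℕ) + 1) - F lam (j : ℕ)
        = (∏ k : Fin n, if (k : ℕ) < (j : ℕ) then P k (lam k)
            else if k = j then P k (lam k) - Q k (lam k) else Q k (lam k)) := by
    intro j lam
    have hsplit : ∀ (f : Fin n → ℝ), (∏ k : Fin n, f k) = f j * ∏ k ∈ Finset.univ.erase j, f k := by
      intro f
      exact (Finset.mul_prod_erase Finset.univ f (Finset.mem_univ j)).symm
    have hcong : ∀ (A B : Fin n → ℝ), (∀ k ∈ Finset.univ.erase j, A k = B k) →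
        ∏ k ∈ Finset.univ.erase j, A k = ∏ k ∈ Finset.univ.erase j, B k :=
      fun A B h => Finset.prod_congr rfl h
    simp only [hF]
    rw [hsplit (fun k => if (k : ℕ) < (j : ℕ) + 1 then P k (lam k) else Q k (lam k)),
        hsplit (fun k => if (k : ℕ) < (j : ℕ) then P k (lam k) else Q k (lam k)),
        hsplit (fun k => if (k : ℕ) < (j : ℕ) then P k (lam k)
            else if k = j then P k (lam k) - Q k (lam k) else Q k (lam k))]
    have e1 : ∏ k ∈ Finset.univ.erase j,
        (if (k : ℕ) < (j : ℕ) + 1 then P k (lam k) else Q k (lam k))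
        = ∏ k ∈ Finset.univ.erase j,
        (if (k : ℕ) < (j : ℕ) then P k (lam k) else Q k (lam k)) := by
      apply hcong
      intro k hk
      have hkj : k ≠ j := (Finset.mem_erase.mp hk).1
      have : ((k : ℕ) < (j : ℕ) + 1) ↔ ((k : ℕ) < (j : ℕ)) := by
        constructor
        · intro h
          rcases Nat.lt_succ_iff_lt_or_eq.mp h with h' | h'
          · exact h'
          · exact absurd (Fin.ext h') hkj
        · intro h; omega
      simp [this]
    have e2 : ∏ k ∈ Finset.univ.erase j,
        (if (k : ℕ) < (j : ℕ) then P k (lam k)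
          else if k = j then P k (lam k) - Q k (lam k) else Q k (lam k))
        = ∏ k ∈ Finset.univ.erase j,
        (if (k : ℕ) < (j : ℕ) then P k (lam k) else Q k (lam k)) := by
      apply hcong
      intro k hk
      have hkj : k ≠ j := (Finset.mem_erase.mp hk).1
      simp [hkj]
    rw [e1, e2]
    have h1 : ((j : ℕ) < (j : ℕ) + 1) := Nat.lt_succ_self _
    have h2 : ¬ ((j : ℕ) < (j : ℕ)) := lt_irrefl _
    simp only [h1, h2, if_true, if_false, if_pos rfl]
    ring
  -- per-j sum over lam
  have stepsum : ∀ j : Fin n,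
      ∑ lam : Fin n → Fin L, |F lam ((j : ℕ) + 1) - F lam (j : ℕ)|
        = ∑ ℓ, |P j ℓ - Q j ℓ| := by
    intro j
    have habs : ∀ lam : Fin n → Fin L,
        |F lam ((j : ℕ) + 1) - F lam (j : ℕ)|
          = ∏ k : Fin n, (if (k : ℕ) < (j : ℕ) then P k (lam k)
              else if k = j then |P k (lam k) - Q k (lam k)| else Q k (lam k)) := by
      intro lam
      rw [step j lam, Finset.abs_prod]
      apply Finset.prod_congr rfl
      intro k _
      by_cases h1 : (k : ℕ) < (j : ℕ)
      · simp [h1, abs_of_nonneg (hP.1 k (lam k))]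
      · by_cases h2 : k = j
        · simp [h1, h2]
        · simp [h1, h2, abs_of_nonneg (hQ.1 k (lam k))]
    calc ∑ lam : Fin n → Fin L, |F lam ((j : ℕ) + 1) - F lam (j : ℕ)|
        = ∑ lam : Fin n → Fin L, ∏ k : Fin n,
            (if (k : ℕ) < (j : ℕ) then P k (lam k)
              else if k = j then |P k (lam k) - Q k (lam k)| else Q k (lam k)) := by
          exact Finset.sum_congr rfl fun lam _ => habs lam
      _ = ∏ k : Fin n, ∑ ℓ : Fin L,
            (if (k : ℕ) < (j : ℕ) then P k ℓ
              else if k = j then |P k ℓ - Q k ℓ| else Q k ℓ) := by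
          rw [Fintype.prod_sum]
      _ = ∑ ℓ, |P j ℓ - Q j ℓ| := by
          rw [← Finset.mul_prod_erase Finset.univ _ (Finset.mem_univ j)]
          have h1 : ∑ ℓ : Fin L, (if (j : ℕ) < (j : ℕ) then P j ℓ
              else if j = j then |P j ℓ - Q j ℓ| else Q j ℓ) = ∑ ℓ, |P j ℓ - Q j ℓ| := by
            simp
          rw [h1]
          have h2 : ∏ k ∈ Finset.univ.erase j, (∑ ℓ : Fin L, (if (k : ℕ) < (j : ℕ) then P k ℓ
              else if k = j then |P k ℓ - Q k ℓ| else Q k ℓ)) = 1 := by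
            apply Finset.prod_eq_one
            intro k hk
            have hkj : k ≠ j := (Finset.mem_erase.mp hk).1
            by_cases h : (k : ℕ) < (j : ℕ)
            · simp [h, hP.2 k]
            · simp [h, hkj, hQ.2 k]
          rw [h2, mul_one]
  calc ∑ lam : Fin n → Fin L, |(∏ j, P j (lam j)) - ∏ j, Q j (lam j)|
      = ∑ lam : Fin n → Fin L, |∑ j ∈ Finset.range n, (F lam (j + 1) - F lam j)| := by
        exact Finset.sum_congr rfl fun lam _ => by rw [tele lam]
    _ ≤ ∑ lam : Fin n → Fin L, ∑ j ∈ Finset.range n, |F lam (j + 1) - F lam j| :=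
        Finset.sum_le_sum fun lam _ => Finset.abs_sum_le_sum_abs _ _
    _ = ∑ j ∈ Finset.range n, ∑ lam : Fin n → Fin L, |F lam (j + 1) - F lam j| :=
        Finset.sum_comm
    _ = ∑ j : Fin n, ∑ lam : Fin n → Fin L, |F lam ((j : ℕ) + 1) - F lam (j : ℕ)| :=
        Finset.sum_range (n := n) fun j => ∑ lam : Fin n → Fin L, |F lam (j + 1) - F lam j|
    _ = ∑ j : Fin n, ∑ ℓ, |P j ℓ - Q j ℓ| := Finset.sum_congr rfl fun j _ => stepsum j

/-- 1-stability of the UA ranking. -/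
lemma rUA_stable {n L : ℕ} (P Q : Fin n → Fin L → ℝ)
    (hP : rowStochastic P) (hQ : rowStochastic Q) (i k : Fin n) :
    |rUA P i k - rUA Q i k| ≤ ∑ a, ∑ ℓ, |P a ℓ - Q a ℓ| := by
  unfold rUA
  rw [← Finset.sum_sub_distrib]
  calc |∑ lam : Fin n → Fin L,
        ((∏ j, P j (lam j)) * condRank lam i k - (∏ j, Q j (lam j)) * condRank lam i k)|
      ≤ ∑ lam : Fin n → Fin L,
        |(∏ j, P j (lam j)) * condRank lam i k - (∏ j, Q j (lam j)) * condRank lam i k| :=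
        Finset.abs_sum_le_sum_abs _ _
    _ ≤ ∑ lam : Fin n → Fin L, |(∏ j, P j (lam j)) - ∏ j, Q j (lam j)| := by
        apply Finset.sum_le_sum
        intro lam _
        rw [← sub_mul, abs_mul]
        calc |(∏ j, P j (lam j)) - ∏ j, Q j (lam j)| * |condRank lam i k|
            ≤ |(∏ j, P j (lam j)) - ∏ j, Q j (lam j)| * 1 := by
              apply mul_le_mul_of_nonneg_left _ (abs_nonneg _)
              rw [abs_of_nonneg (condRank_nonneg lam i k)]
              exact condRank_le_one lam i k
          _ = _ := mul_one _
    _ ≤ ∑ a, ∑ ℓ, |P a ℓ - Q a ℓ| := tv_prod P Q hP hQ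

/-- The mixture ranking function
`r_mix^φ = φ · r_UA + (1−φ) · r_opt` (with `r_opt` any ranking function whose
outputs are doubly stochastic) is `(φ, 1−φ)`-approximately stable:
`‖r_mix^φ(P) − r_mix^φ(P')‖∞ ≤ φ ‖P−P'‖₁ + (1−φ)`. -/
theorem rmix_approximately_stable
    (n L : ℕ) (φ : ℝ) (hφ0 : 0 ≤ φ) (hφ1 : φ ≤ 1)
    (ropt : (Fin n → Fin L → ℝ) → Fin n → Fin n → ℝ)
    (hropt : ∀ P : Fin n → Fin L → ℝ, rowStochastic P → doublyStochastic' (ropt P)) :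
    ∀ P Q : Fin n → Fin L → ℝ, rowStochastic P → rowStochastic Q →
      ∀ i k : Fin n,
        |(φ * rUA P i k + (1 - φ) * ropt P i k) -
            (φ * rUA Q i k + (1 - φ) * ropt Q i k)|
          ≤ φ * (∑ a, ∑ ℓ, |P a ℓ - Q a ℓ|) + (1 - φ) := by
  intro P Q hP hQ i k
  have hUA := rUA_stable P Q hP hQ i k
  have hbound : ∀ (R : Fin n → Fin L → ℝ), rowStochastic R →
      0 ≤ ropt R i k ∧ ropt R i k ≤ 1 := by
    intro R hR
    obtain ⟨h0, h1, _⟩ := hropt R hR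
    refine ⟨h0 i k, ?_⟩
    calc ropt R i k ≤ ∑ k', ropt R i k' :=
          Finset.single_le_sum (fun k' _ => h0 i k') (Finset.mem_univ k)
      _ = 1 := h1 i
  obtain ⟨hP0, hP1⟩ := hbound P hP
  obtain ⟨hQ0, hQ1⟩ := hbound Q hQ
  have hopt : |ropt P i k - ropt Q i k| ≤ 1 := by
    rw [abs_sub_le_iff]; constructor <;> linarith
  calc |(φ * rUA P i k + (1 - φ) * ropt P i k) - (φ * rUA Q i k + (1 - φ) * ropt Q i k)|
      = |φ * (rUA P i k - rUA Q i k) + (1 - φ) * (ropt P i k - ropt Q i k)| := by ring_nf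
    _ ≤ |φ * (rUA P i k - rUA Q i k)| + |(1 - φ) * (ropt P i k - ropt Q i k)| := abs_add_le _ _
    _ = φ * |rUA P i k - rUA Q i k| + (1 - φ) * |ropt P i k - ropt Q i k| := by
        rw [abs_mul, abs_mul, abs_of_nonneg hφ0, abs_of_nonneg (by linarith : (0:ℝ) ≤ 1 - φ)]
    _ ≤ φ * (∑ a, ∑ ℓ, |P a ℓ - Q a ℓ|) + (1 - φ) * 1 := by
        have := mul_le_mul_of_nonneg_left hUA hφ0
        have := mul_le_mul_of_nonneg_left hopt (by linarith : (0:ℝ) ≤ 1 - φ)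
        linarith
    _ = φ * (∑ a, ∑ ℓ, |P a ℓ - Q a ℓ|) + (1 - φ) := by ring
end
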